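/- arXiv:2411.11819 — 3 statements merged into one kernel-verified Lean document; each statement's English description precedes it below -/
import Mathlib

section
/- Let V be a finite symmetric spherical sampling in ℝ³, f : V → ℝ antipodally symmetric, and L : V × V → ℝ jointly negation-symmetric, regarded as a matrix indexed by V. Let L⁺ be the hemispherical kernel on V⁺, regarded as a matrix indexed by V⁺. Then for every real polynomial P and every p ∈ V, evaluating the matrix polynomial gives (P(L)·f)(p) = (P(L⁺)·f⁺)(p⁺), where P(L) acts on f by matrix-vector multiplication, f⁺ is the restriction of f to V⁺, and p⁺ = p if p ∈ V⁺ and p⁺ = −p otherwise. In particular all Chebyshev filterings T_k(L)f used in the spherical graph convolution are entirely determined by the hemispherical data (L⁺, f⁺). -/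
open Finset Polynomial

attribute [local instance] Classical.propDecidable

/-- The open-hemisphere predicate selecting one point of each antipodal pair. -/
def hemi (p : EuclideanSpace ℝ (Fin 3)) : Prop :=
  0 < p 2 ∨ (p 2 = 0 ∧ 0 < p 1) ∨ (p 2 = 0 ∧ p 1 = 0 ∧ 0 < p 0)

/-- For `p` in the sampling, its representative on the hemisphere. -/
noncomputable def hemiRep (p : EuclideanSpace ℝ (Fin 3)) : EuclideanSpace ℝ (Fin 3) :=
  if hemi p then p else -p

lemma neg_coord (q : EuclideanSpace ℝ (Fin 3)) (i : Fin 3) : (-q) i = -(q i) := rfl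

lemma hemi_or_neg {q : EuclideanSpace ℝ (Fin 3)} (hq : q ≠ 0) : hemi q ∨ hemi (-q) := by
  rcases lt_trichotomy 0 (q 2) with h2 | h2 | h2
  · exact Or.inl (Or.inl h2)
  · rcases lt_trichotomy 0 (q 1) with h1 | h1 | h1
    · exact Or.inl (Or.inr (Or.inl ⟨h2.symm, h1⟩))
    · rcases lt_trichotomy 0 (q 0) with h0 | h0 | h0
      · exact Or.inl (Or.inr (Or.inr ⟨h2.symm, h1.symm, h0⟩))
      · exfalso
        apply hq
        ext i
        fin_cases i <;> simp_all
      · refine Or.inr (Or.inr (Or.inr ⟨?_, ?_, ?_⟩)) <;> rw [neg_coord] <;> linarith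
    · refine Or.inr (Or.inr (Or.inl ⟨?_, ?_⟩)) <;> rw [neg_coord] <;> linarith
  · exact Or.inr (Or.inl (by rw [neg_coord]; linarith))

lemma hemi_not_both {q : EuclideanSpace ℝ (Fin 3)} (h : hemi q) (h' : hemi (-q)) : False := by
  simp only [hemi, neg_coord] at h h'
  rcases h with h | ⟨h, h1⟩ | ⟨h, h1, h0⟩ <;>
    rcases h' with h' | ⟨h', h1'⟩ | ⟨h', h1', h0'⟩ <;> linarith

/-- Evaluating any real polynomial (e.g. a Chebyshev polynomial) of the spherical kernel
matrix on an antipodally symmetric signal is entirely determined by the hemispherical data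
`(L⁺, f⁺)`: `(P(L)·f)(p) = (P(L⁺)·f⁺)(p⁺)`. -/
theorem polynomial_filtering_eq_hemispherical
    (V : Finset (EuclideanSpace ℝ (Fin 3)))
    (hVsym : ∀ p ∈ V, -p ∈ V)
    (hVunit : ∀ p ∈ V, ‖p‖ = 1)
    (f : EuclideanSpace ℝ (Fin 3) → ℝ)
    (hf : ∀ p ∈ V, f (-p) = f p)
    (L : EuclideanSpace ℝ (Fin 3) → EuclideanSpace ℝ (Fin 3) → ℝ)
    (hL : ∀ p ∈ V, ∀ q ∈ V, L (-p) (-q) = L p q)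
    (P : Polynomial ℝ)
    (p : EuclideanSpace ℝ (Fin 3)) (hp : p ∈ V)
    (hpplus : hemiRep p ∈ V.filter hemi) :
    (Polynomial.aeval
        (Matrix.of fun a b : {x // x ∈ V} => L a.1 b.1) P).mulVec
        (fun q : {x // x ∈ V} => f q.1) ⟨p, hp⟩
      = (Polynomial.aeval
        (Matrix.of fun a b : {x // x ∈ V.filter hemi} => L a.1 b.1 + L a.1 (-b.1)) P).mulVec
        (fun q : {x // x ∈ V.filter hemi} => f q.1) ⟨hemiRep p, hpplus⟩ := by
  classical
  have hne : ∀ q ∈ V, q ≠ (0 : EuclideanSpace ℝ (Fin 3)) := by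
    intro q hq h0
    have := hVunit q hq
    rw [h0] at this
    simp at this
  set M : Matrix {x // x ∈ V} {x // x ∈ V} ℝ :=
    Matrix.of fun a b : {x // x ∈ V} => L a.1 b.1 with hM
  set Mp : Matrix {x // x ∈ V.filter hemi} {x // x ∈ V.filter hemi} ℝ :=
    Matrix.of fun a b : {x // x ∈ V.filter hemi} => L a.1 b.1 + L a.1 (-b.1) with hMp
  -- reindexing sum over V by negation
  have sum_neg : ∀ (F : EuclideanSpace ℝ (Fin 3) → ℝ), ∑ q ∈ V, F q = ∑ q ∈ V, F (-q) := by
    intro F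
    refine Finset.sum_nbij' (fun q => -q) (fun q => -q) ?_ ?_ ?_ ?_ ?_
    · intro a ha; exact hVsym a ha
    · intro a ha; exact hVsym a ha
    · intro a _; simp
    · intro a _; simp
    · intro a _; simp
  -- pairing lemma
  have sum_pair : ∀ (g : EuclideanSpace ℝ (Fin 3) → ℝ), (∀ q ∈ V, g (-q) = g q) → ∀ (φ : EuclideanSpace ℝ (Fin 3) → ℝ),
      ∑ q ∈ V, φ q * g q = ∑ q ∈ V.filter hemi, (φ q + φ (-q)) * g q := by
    intro g hg φ
    rw [← Finset.sum_filter_add_sum_filter_not V hemi]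
    have h2 : ∑ q ∈ V.filter (fun q => ¬ hemi q), φ q * g q
        = ∑ q ∈ V.filter hemi, φ (-q) * g (-q) := by
      refine Finset.sum_nbij' (fun q => -q) (fun q => -q) ?_ ?_ ?_ ?_ ?_
      · intro a ha
        rw [Finset.mem_filter] at ha ⊢
        refine ⟨hVsym a ha.1, ?_⟩
        rcases hemi_or_neg (hne a ha.1) with h | h
        · exact absurd h ha.2
        · exact h
      · intro a ha
        rw [Finset.mem_filter] at ha ⊢
        exact ⟨hVsym a ha.1, fun h => hemi_not_both ha.2 h⟩
      · intro a _; simp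
      · intro a _; simp
      · intro a _; simp
    rw [h2, ← Finset.sum_add_distrib]
    refine Finset.sum_congr rfl ?_
    intro q hq
    rw [Finset.mem_filter] at hq
    rw [hg q hq.1]
    ring
  -- the "next layer" map
  have key : ∀ (n : ℕ) (g : EuclideanSpace ℝ (Fin 3) → ℝ), (∀ q ∈ V, g (-q) = g q) →
      ∀ (r : EuclideanSpace ℝ (Fin 3)) (hr : r ∈ V) (hrp : hemiRep r ∈ V.filter hemi),
      (M ^ n).mulVec (fun q : {x // x ∈ V} => g q.1) ⟨r, hr⟩
        = (Mp ^ n).mulVec (fun q : {x // x ∈ V.filter hemi} => g q.1) ⟨hemiRep r, hrp⟩ := by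
    intro n
    induction n with
    | zero =>
      intro g hg r hr hrp
      simp only [pow_zero, Matrix.one_mulVec]
      unfold hemiRep
      split
      · rfl
      · exact (hg r hr).symm
    | succ n ih =>
      intro g hg r hr hrp
      set G : EuclideanSpace ℝ (Fin 3) → ℝ := fun x => ∑ q ∈ V, L x q * g q with hG
      have hGsym : ∀ q ∈ V, G (-q) = G q := by
        intro q hq
        rw [hG]
        simp only
        rw [sum_neg (fun x => L (-q) x * g x)]
        refine Finset.sum_congr rfl ?_
        intro a ha
        rw [hL q hq a ha, hg a ha]
      have hMg : M.mulVec (fun q : {x // x ∈ V} => g q.1)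
          = fun q : {x // x ∈ V} => G q.1 := by
        funext a
        rw [Matrix.mulVec, dotProduct]
        rw [hG]
        simp only [hM, Matrix.of_apply]
        exact Finset.sum_coe_sort V (fun x => L a.1 x * g x)
      have hMpg : Mp.mulVec (fun q : {x // x ∈ V.filter hemi} => g q.1)
          = fun q : {x // x ∈ V.filter hemi} => G q.1 := by
        funext a
        rw [Matrix.mulVec, dotProduct]
        rw [hG]
        simp only [hMp, Matrix.of_apply]
        rw [sum_pair g hg (fun x => L a.1 x)]
        exact Finset.sum_coe_sort (V.filter hemi) (fun x => (L a.1 x + L a.1 (-x)) * g x)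
      rw [pow_succ, pow_succ, ← Matrix.mulVec_mulVec, ← Matrix.mulVec_mulVec, hMg, hMpg]
      exact ih G hGsym r hr hrp
  -- assemble via aeval_eq_sum_range
  rw [Polynomial.aeval_eq_sum_range (R := ℝ) M, Polynomial.aeval_eq_sum_range (R := ℝ) Mp]
  have expand : ∀ (N : ℕ) (ι : Type) [Fintype ι] [DecidableEq ι]
      (A : ℕ → Matrix ι ι ℝ) (v : ι → ℝ) (i : ι),
      ((∑ k ∈ Finset.range N, P.coeff k • A k).mulVec v) i
        = ∑ k ∈ Finset.range N, P.coeff k * ((A k).mulVec v i) := by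
    intro N ι _ _ A v i
    simp only [Matrix.mulVec, dotProduct, Matrix.sum_apply, Matrix.smul_apply,
      smul_eq_mul, Finset.sum_mul, mul_assoc]
    rw [Finset.sum_comm]
    simp [Finset.mul_sum]
  rw [expand, expand]
  refine Finset.sum_congr rfl ?_
  intro k _
  rw [key k f hf p hp hpplus]
end

section
/- Let V be a finite symmetric spherical sampling in ℝ³, L : V × V → ℝ a jointly negation-symmetric kernel regarded as a matrix indexed by V, and L⁺ the hemispherical kernel on V⁺. Let P be a finite set of spatial positions in ℝ³, let f : P → (V → ℝ) assign to each position y an antipodally symmetric spherical signal f(y), let K ≥ 1, and let α₀,…,α_{K−1} : ℝ → ℝ be spatial filter profiles. Then for every x ∈ ℝ³ and every p ∈ V, the E(3)×SO(3)-convolution output f_out(x)(p) = Σ_{y∈P} Σ_{k=0}^{K−1} α_k(‖x−y‖)·(T_k(L)·f(y))(p) equals the hemispherical convolution output Σ_{y∈P} Σ_{k=0}^{K−1} α_k(‖x−y‖)·(T_k(L⁺)·f(y)⁺)(p⁺), where T_k(L) acts by matrix-vector multiplication, f(y)⁺ is the restriction of f(y) to V⁺, and p⁺ = p if p ∈ V⁺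 and p⁺ = −p otherwise. -/
open Finset Polynomial

attribute [local instance] Classical.propDecidable

lemma neg_apply' (p : EuclideanSpace ℝ (Fin 3)) (i : Fin 3) : (-p) i = -(p i) := rfl

lemma hemi_neg_iff {p : EuclideanSpace ℝ (Fin 3)} (hp : p ≠ 0) : hemi (-p) ↔ ¬ hemi p := by
  have h0 : ¬ (p 0 = 0 ∧ p 1 = 0 ∧ p 2 = 0) := by
    rintro ⟨h0, h1, h2⟩
    apply hp
    ext i
    fin_cases i <;> assumption
  simp only [hemi, neg_apply']
  constructor
  · rintro (h | ⟨h, h'⟩ | ⟨h, h', h''⟩) <;> rintro (g | ⟨g,g'⟩ | ⟨g,g',g''⟩) <;> linarith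
  · intro h
    rcases lt_trichotomy (p 2) 0 with h2 | h2 | h2
    · left; linarith
    · rcases lt_trichotomy (p 1) 0 with h1 | h1 | h1
      · right; left; constructor <;> linarith
      · rcases lt_trichotomy (p 0) 0 with hh | hh | hh
        · right; right; refine ⟨by linarith, by linarith, by linarith⟩
        · exact absurd ⟨hh, h1, h2⟩ h0
        · exact absurd (Or.inr (Or.inr ⟨h2, h1, hh⟩)) h
      · exact absurd (Or.inr (Or.inl ⟨h2, h1⟩)) h
    · exact absurd (Or.inl h2) h

lemma hemiRep_neg {p : EuclideanSpace ℝ (Fin 3)} (hp : p ≠ 0) : hemiRep (-p) = hemiRep p := by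
  unfold hemiRep
  by_cases h : hemi p
  · rw [if_pos h, if_neg (by rw [hemi_neg_iff hp]; exact fun h' => h' h), neg_neg]
  · rw [if_neg h, if_pos ((hemi_neg_iff hp).2 h)]

lemma hemiRep_of_hemi {p : EuclideanSpace ℝ (Fin 3)} (h : hemi p) : hemiRep p = p := if_pos h

lemma hemiRep_mem {V : Finset (EuclideanSpace ℝ (Fin 3))}
    (hVsym : ∀ p ∈ V, -p ∈ V) (hVnz : ∀ p ∈ V, p ≠ 0)
    {p : EuclideanSpace ℝ (Fin 3)} (hp : p ∈ V) : hemiRep p ∈ V.filter hemi := by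
  unfold hemiRep
  by_cases h : hemi p
  · rw [if_pos h]; exact Finset.mem_filter.2 ⟨hp, h⟩
  · rw [if_neg h]
    exact Finset.mem_filter.2 ⟨hVsym p hp, (hemi_neg_iff (hVnz p hp)).2 h⟩

lemma key_mulVec (V : Finset (EuclideanSpace ℝ (Fin 3)))
    (hVsym : ∀ p ∈ V, -p ∈ V) (hVnz : ∀ p ∈ V, p ≠ 0)
    (L : EuclideanSpace ℝ (Fin 3) → EuclideanSpace ℝ (Fin 3) → ℝ)
    (hL : ∀ p ∈ V, ∀ q ∈ V, L (-p) (-q) = L p q)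
    (v : {x // x ∈ V} → ℝ) (w : {x // x ∈ V.filter hemi} → ℝ)
    (hcompat : ∀ (q : EuclideanSpace ℝ (Fin 3)) (hq : q ∈ V)
      (hq' : hemiRep q ∈ V.filter hemi), v ⟨q, hq⟩ = w ⟨hemiRep q, hq'⟩)
    (p : EuclideanSpace ℝ (Fin 3)) (hp : p ∈ V) (hp' : hemiRep p ∈ V.filter hemi) :
    (Matrix.of fun a b : {x // x ∈ V} => L a.1 b.1).mulVec v ⟨p, hp⟩
      = (Matrix.of fun a b : {x // x ∈ V.filter hemi} => L a.1 b.1 + L a.1 (-b.1)).mulVec w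
          ⟨hemiRep p, hp'⟩ := by
  classical
  set vt : EuclideanSpace ℝ (Fin 3) → ℝ := fun q => if h : q ∈ V then v ⟨q, h⟩ else 0 with hvt
  -- vt symmetric on V
  have hvsymm : ∀ q ∈ V, vt (-q) = vt q := by
    intro q hq
    have hq' := hVsym q hq
    have h1 : vt (-q) = v ⟨-q, hq'⟩ := dif_pos hq'
    have h2 : vt q = v ⟨q, hq⟩ := dif_pos hq
    rw [h1, h2, hcompat q hq (hemiRep_mem hVsym hVnz hq),
      hcompat (-q) hq' (by rw [hemiRep_neg (hVnz q hq)]; exact hemiRep_mem hVsym hVnz hq)]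
    congr 1
    exact Subtype.ext (hemiRep_neg (hVnz q hq))
  -- LHS as sum over V
  have hLHS : (Matrix.of fun a b : {x // x ∈ V} => L a.1 b.1).mulVec v ⟨p, hp⟩
      = ∑ q ∈ V, L p q * vt q := by
    rw [Matrix.mulVec, dotProduct]
    rw [← Finset.sum_coe_sort V (fun q => L p q * vt q)]
    refine Finset.sum_congr rfl fun j _ => ?_
    congr 1
    show v j = vt j.1
    rw [show vt j.1 = if h : j.1 ∈ V then v ⟨j.1, h⟩ else 0 from rfl, dif_pos j.2]
  -- RHS as sum over V.filter hemi
  have hRHS : (Matrix.of fun a b : {x // x ∈ V.filter hemi} => L a.1 b.1 + L a.1 (-b.1)).mulVec w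
          ⟨hemiRep p, hp'⟩
      = ∑ q ∈ V.filter hemi, (L (hemiRep p) q + L (hemiRep p) (-q)) * vt q := by
    rw [Matrix.mulVec, dotProduct]
    rw [← Finset.sum_coe_sort (V.filter hemi)
      (fun q => (L (hemiRep p) q + L (hemiRep p) (-q)) * vt q)]
    refine Finset.sum_congr rfl fun j _ => ?_
    congr 1
    have hjV : j.1 ∈ V := (Finset.mem_filter.1 j.2).1
    have hjh : hemi j.1 := (Finset.mem_filter.1 j.2).2
    have : vt j.1 = v ⟨j.1, hjV⟩ := by
      rw [show vt j.1 = if h : j.1 ∈ V then v ⟨j.1, h⟩ else 0 from rfl, dif_pos hjV]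
    rw [this, hcompat j.1 hjV (by rw [hemiRep_of_hemi hjh]; exact j.2)]
    exact congrArg w (Subtype.ext (hemiRep_of_hemi hjh).symm)
  rw [hLHS, hRHS]
  -- split the sum over V into hemi and non-hemi parts
  rw [← Finset.sum_filter_add_sum_filter_not V hemi (fun q => L p q * vt q)]
  have hbij : ∑ q ∈ V.filter (fun q => ¬ hemi q), L p q * vt q
      = ∑ q ∈ V.filter hemi, L p (-q) * vt q := by
    refine Finset.sum_nbij' (i := fun q => -q) (j := fun q => -q) ?_ ?_ ?_ ?_ ?_
    · intro a ha
      obtain ⟨haV, hah⟩ := Finset.mem_filter.1 ha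
      exact Finset.mem_filter.2 ⟨hVsym a haV, (hemi_neg_iff (hVnz a haV)).2 hah⟩
    · intro a ha
      obtain ⟨haV, hah⟩ := Finset.mem_filter.1 ha
      refine Finset.mem_filter.2 ⟨hVsym a haV, ?_⟩
      rw [hemi_neg_iff (hVnz a haV)] at *
      exact fun h => h hah
    · intro a _; exact neg_neg a
    · intro a _; exact neg_neg a
    · intro a ha
      obtain ⟨haV, hah⟩ := Finset.mem_filter.1 ha
      rw [neg_neg, hvsymm a haV]
  rw [hbij, ← Finset.sum_add_distrib]
  refine Finset.sum_congr rfl fun q hq => ?_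
  obtain ⟨hqV, hqh⟩ := Finset.mem_filter.1 hq
  rw [add_mul]
  by_cases hph : hemi p
  · rw [hemiRep_of_hemi hph]
  · have : hemiRep p = -p := if_neg hph
    rw [this, ← hL p hp q hqV, ← hL p hp (-q) (hVsym q hqV), neg_neg]
    ring

lemma aeval_two_X_mulVec {n : Type} [Fintype n] [DecidableEq n]
    (M : Matrix n n ℝ) (q1 q2 : ℝ[X]) (u : n → ℝ) (i : n) :
    (Polynomial.aeval M (2 * X * q1 - q2)).mulVec u i
      = 2 * (M.mulVec ((Polynomial.aeval M q1).mulVec u) i)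
        - (Polynomial.aeval M q2).mulVec u i := by
  rw [map_sub, map_mul, map_mul, map_ofNat, Polynomial.aeval_X]
  rw [Matrix.sub_mulVec, Pi.sub_apply]
  congr 1
  rw [mul_assoc, two_mul, Matrix.add_mulVec, Pi.add_apply, ← Matrix.mulVec_mulVec, two_mul]

lemma cheb_claim (V : Finset (EuclideanSpace ℝ (Fin 3)))
    (hVsym : ∀ p ∈ V, -p ∈ V) (hVnz : ∀ p ∈ V, p ≠ 0)
    (L : EuclideanSpace ℝ (Fin 3) → EuclideanSpace ℝ (Fin 3) → ℝ)
    (hL : ∀ p ∈ V, ∀ q ∈ V, L (-p) (-q) = L p q)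
    (g : EuclideanSpace ℝ (Fin 3) → ℝ) (hg : ∀ q ∈ V, g (-q) = g q)
    (k : ℕ) :
    ∀ (p : EuclideanSpace ℝ (Fin 3)) (hp : p ∈ V) (hp' : hemiRep p ∈ V.filter hemi),
    (Polynomial.aeval (Matrix.of fun a b : {v // v ∈ V} => L a.1 b.1)
        (Polynomial.Chebyshev.T ℝ k)).mulVec (fun q : {v // v ∈ V} => g q.1) ⟨p, hp⟩
      = (Polynomial.aeval
            (Matrix.of fun a b : {v // v ∈ V.filter hemi} => L a.1 b.1 + L a.1 (-b.1))
            (Polynomial.Chebyshev.T ℝ k)).mulVec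
          (fun q : {v // v ∈ V.filter hemi} => g q.1) ⟨hemiRep p, hp'⟩ := by
  have hgrep : ∀ q ∈ V, g (hemiRep q) = g q := by
    intro q hq
    unfold hemiRep
    by_cases h : hemi q
    · rw [if_pos h]
    · rw [if_neg h, hg q hq]
  induction k using Nat.strong_induction_on with
  | _ k ih =>
    match k with
    | 0 =>
      intro p hp hp'
      simp only [Nat.cast_zero, Polynomial.Chebyshev.T_zero, map_one, Matrix.one_mulVec]
      exact (hgrep p hp).symm
    | 1 =>
      intro p hp hp'
      simp only [Nat.cast_one, Polynomial.Chebyshev.T_one, Polynomial.aeval_X]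
      refine key_mulVec V hVsym hVnz L hL _ _ ?_ p hp hp'
      intro q hq hq'
      exact (hgrep q hq).symm
    | (m+2) =>
      intro p hp hp'
      have hcast : ((m + 2 : ℕ) : ℤ) = ((m : ℕ) : ℤ) + 2 := by push_cast; ring
      rw [hcast, Polynomial.Chebyshev.T_add_two,
        aeval_two_X_mulVec, aeval_two_X_mulVec]
      have ih1 := ih (m + 1) (by omega)
      have ih0 := ih m (by omega)
      have hcast1 : ((m + 1 : ℕ) : ℤ) = ((m : ℕ) : ℤ) + 1 := by push_cast; ring
      rw [ih0 p hp hp']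
      congr 2
      refine key_mulVec V hVsym hVnz L hL _ _ ?_ p hp hp'
      intro q hq hq'
      have := ih1 q hq hq'
      rw [hcast1] at this
      exact this

/-- The `E(3)×SO(3)`-convolution `f_out(x)(p) = Σ_y Σ_k α_k(‖x-y‖)·(T_k(L)f(y))(p)` equals
its hemispherical counterpart computed from `(L⁺, f(y)⁺)` at `p⁺`. -/
theorem spatio_spherical_conv_eq_hemispherical
    (V : Finset (EuclideanSpace ℝ (Fin 3)))
    (hVsym : ∀ p ∈ V, -p ∈ V)
    (hVunit : ∀ p ∈ V, ‖p‖ = 1)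
    (L : EuclideanSpace ℝ (Fin 3) → EuclideanSpace ℝ (Fin 3) → ℝ)
    (hL : ∀ p ∈ V, ∀ q ∈ V, L (-p) (-q) = L p q)
    (Pos : Finset (EuclideanSpace ℝ (Fin 3)))
    (f : EuclideanSpace ℝ (Fin 3) → EuclideanSpace ℝ (Fin 3) → ℝ)
    (hf : ∀ y ∈ Pos, ∀ p ∈ V, f y (-p) = f y p)
    (K : ℕ) (hK : 1 ≤ K)
    (α : ℕ → ℝ → ℝ)
    (x : EuclideanSpace ℝ (Fin 3))
    (p : EuclideanSpace ℝ (Fin 3)) (hp : p ∈ V)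
    (hpplus : hemiRep p ∈ V.filter hemi) :
    (∑ y ∈ Pos, ∑ k ∈ Finset.range K,
        α k (‖x - y‖) *
          (Polynomial.aeval
              (Matrix.of fun a b : {v // v ∈ V} => L a.1 b.1)
              (Polynomial.Chebyshev.T ℝ k)).mulVec
            (fun q : {v // v ∈ V} => f y q.1) ⟨p, hp⟩)
      = ∑ y ∈ Pos, ∑ k ∈ Finset.range K,
          α k (‖x - y‖) *
            (Polynomial.aeval
                (Matrix.of fun a b : {v // v ∈ V.filter hemi} => L a.1 b.1 + L a.1 (-b.1))
                (Polynomial.Chebyshev.T ℝ k)).mulVec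
              (fun q : {v // v ∈ V.filter hemi} => f y q.1) ⟨hemiRep p, hpplus⟩ := by
  have hVnz : ∀ q ∈ V, q ≠ 0 := by
    intro q hq h0
    have := hVunit q hq
    rw [h0, norm_zero] at this
    norm_num at this
  refine Finset.sum_congr rfl fun y hy => Finset.sum_congr rfl fun k _ => ?_
  congr 1
  exact cheb_claim V hVsym hVnz L hL (f y) (hf y hy) k p hp hpplus
end

section
/- Let E = EuclideanSpace ℝ (Fin 3), let S be the unit sphere in E equipped with the 2-dimensional Hausdorff measure μ, and let E carry Lebesgue measure. Let φ₁ : ℝ → ℝ and φ₂ : ℝ → ℝ be measurable filter profiles and f : E × E → ℝ a measurable signal such that for every (x,q) ∈ E × S the integrand (y,p) ↦ φ₁(‖x−y‖)·φ₂(⟪q,p⟫)·f(y,p) is integrable over E × S. Define the separable isotropic convolution F[f](x,q) = ∫_E ∫_S φ₁(‖x−y‖)·φ₂(⟪q,p⟫)·f(y,p) dμ(p) dy. Then F is E(3)×SO(3)-equivariant: for every isometry T of E and every linear isometry equivalence R of E, F[(y,p) ↦ f(T(y), R(p))](x,q) = F[f](T(x), R(q)) for all x ∈ E and all unit vectors q.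 -/
open MeasureTheory
open scoped RealInnerProductSpace

private lemma isoEquiv_measurePreserving
    (T : EuclideanSpace ℝ (Fin 3) ≃ᵢ EuclideanSpace ℝ (Fin 3)) :
    MeasurePreserving T volume volume := by
  set A := T.toRealAffineIsometryEquiv with hA
  have key : ⇑T = fun y => A.linearIsometryEquiv y + T 0 := by
    funext y
    have h := A.map_vadd (0 : EuclideanSpace ℝ (Fin 3)) y
    simp only [vadd_eq_add, add_zero] at h
    have hc : ⇑A = ⇑T := T.coeFn_toRealAffineIsometryEquiv
    rw [hc] at h
    simpa using h
  rw [show (⇑T) = _ from key]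
  exact (measurePreserving_add_right volume (T 0)).comp
    A.linearIsometryEquiv.measurePreserving


private lemma sphere_mp
    (R : EuclideanSpace ℝ (Fin 3) ≃ₗᵢ[ℝ] EuclideanSpace ℝ (Fin 3)) :
    MeasurePreserving R (μH[2].restrict (Metric.sphere 0 1))
      (μH[2].restrict (Metric.sphere 0 1)) := by
  have hmeas : Measurable R := R.continuous.measurable
  have hpre : R ⁻¹' (Metric.sphere (0 : EuclideanSpace ℝ (Fin 3)) 1)
      = Metric.sphere 0 1 := by
    ext p
    simp [Metric.mem_sphere, dist_zero_right]
  refine ⟨hmeas, ?_⟩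
  calc Measure.map R ((μH[2]).restrict (Metric.sphere (0:EuclideanSpace ℝ (Fin 3)) 1))
      = Measure.map R ((μH[2]).restrict
          (R ⁻¹' (Metric.sphere (0:EuclideanSpace ℝ (Fin 3)) 1))) := by rw [hpre]
    _ = (Measure.map R μH[2]).restrict (Metric.sphere 0 1) :=
        (Measure.restrict_map hmeas Metric.isClosed_sphere.measurableSet).symm
    _ = (μH[2]).restrict (Metric.sphere 0 1) := by
        rw [show ⇑R = ⇑R.toIsometryEquiv from rfl, R.toIsometryEquiv.map_hausdorffMeasure]

/-- The separable isotropic spatio-spherical convolution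
`F[f](x,q) = ∫_E ∫_S φ₁(‖x−y‖)·φ₂(⟪q,p⟫)·f(y,p) dμ(p) dy`
is `E(3)×SO(3)`-equivariant: `F[(y,p) ↦ f(T y, R p)](x,q) = F[f](T x, R q)`. -/
theorem separable_conv_equivariant
    (φ₁ φ₂ : ℝ → ℝ) (hφ₁ : Measurable φ₁) (hφ₂ : Measurable φ₂)
    (f : EuclideanSpace ℝ (Fin 3) → EuclideanSpace ℝ (Fin 3) → ℝ)
    (hf : Measurable (Function.uncurry f))
    (hint : ∀ (x q : EuclideanSpace ℝ (Fin 3)), ‖q‖ = 1 →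
      Integrable
        (fun yp : EuclideanSpace ℝ (Fin 3) × EuclideanSpace ℝ (Fin 3) =>
          φ₁ ‖x - yp.1‖ * φ₂ ⟪q, yp.2⟫ * f yp.1 yp.2)
        (Measure.prod volume (μH[2].restrict (Metric.sphere 0 1))))
    (T : EuclideanSpace ℝ (Fin 3) ≃ᵢ EuclideanSpace ℝ (Fin 3))
    (R : EuclideanSpace ℝ (Fin 3) ≃ₗᵢ[ℝ] EuclideanSpace ℝ (Fin 3))
    (x q : EuclideanSpace ℝ (Fin 3)) (hq : ‖q‖ = 1) :
    ∫ y, ∫ p in Metric.sphere (0 : EuclideanSpace ℝ (Fin 3)) 1,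
        φ₁ ‖x - y‖ * φ₂ ⟪q, p⟫ * f (T y) (R p) ∂μH[2]
      = ∫ y, ∫ p in Metric.sphere (0 : EuclideanSpace ℝ (Fin 3)) 1,
          φ₁ ‖T x - y‖ * φ₂ ⟪R q, p⟫ * f y p ∂μH[2] := by
  have hT := isoEquiv_measurePreserving T
  have hR := sphere_mp R
  have hTemb : MeasurableEmbedding T := T.toHomeomorph.measurableEmbedding
  have hRemb : MeasurableEmbedding R :=
    (R.toHomeomorph).measurableEmbedding
  rw [← hT.integral_comp hTemb
    (fun y => ∫ p in Metric.sphere (0 : EuclideanSpace ℝ (Fin 3)) 1,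
      φ₁ ‖T x - y‖ * φ₂ ⟪R q, p⟫ * f y p ∂μH[2])]
  refine integral_congr_ae (Filter.Eventually.of_forall fun y => ?_)
  simp only
  rw [← hR.integral_comp hRemb
    (fun p => φ₁ ‖T x - T y‖ * φ₂ ⟪R q, p⟫ * f (T y) p)]
  refine integral_congr_ae (Filter.Eventually.of_forall fun p => ?_)
  simp only
  rw [show ‖T x - T y‖ = ‖x - y‖ by
    rw [← dist_eq_norm, ← dist_eq_norm, T.isometry.dist_eq],
    R.inner_map_map]
end
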